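/- arXiv:1908.07294 — 2 statements merged into one kernel-verified Lean document; each statement's English description precedes it below -/
import Mathlib

section
/- The class of polyhedral subsets of ℤ^m is closed under finite union, finite intersection, and set difference. -/
/-- An elementary region in `ℤ^m`: a hyperplane `{z | a·z = b}`, an open half-space
`{z | a·z > b}`, or a congruence set `{z | a·z ≡ b (mod c)}` with `c > 0`. -/
def ElementaryRegion {m : ℕ} (E : Set (Fin m → ℤ)) : Prop :=
  (∃ (a : Fin m → ℤ) (b : ℤ), E = {z | (∑ i, a i * z i) = b}) ∨
  (∃ (a : Fin m → ℤ) (b : ℤ), E = {z | (∑ i, a i * z i) > b}) ∨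
  (∃ (a : Fin m → ℤ) (b c : ℤ), 0 < c ∧ E = {z | (∑ i, a i * z i) ≡ b [ZMOD c]})

/-- A basic polyhedral set is a finite intersection of elementary regions. -/
def BasicPolyhedral {m : ℕ} (B : Set (Fin m → ℤ)) : Prop :=
  ∃ (k : ℕ) (E : Fin k → Set (Fin m → ℤ)),
    (∀ i, ElementaryRegion (E i)) ∧ B = ⋂ i, E i

/-- A polyhedral set is a finite disjoint union of basic polyhedral sets. -/
def Polyhedral {m : ℕ} (P : Set (Fin m → ℤ)) : Prop :=
  ∃ (k : ℕ) (B : Fin k → Set (Fin m → ℤ)),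
    (∀ i, BasicPolyhedral (B i)) ∧
    (∀ i j, i ≠ j → Disjoint (B i) (B j)) ∧
    P = ⋃ i, B i

/-!
Polyhedral sets are closed under intersection: intersect the pieces pairwise. The complement of
an elementary region is polyhedral, being a union of fibres of `z ↦ sign (a·z - b)` or
`z ↦ a·z mod c`, which are elementary. Disjointifying `⋃ i, (E i)ᶜ` makes the complement of a
basic set polyhedral, and by De Morgan so is the complement of a polyhedral set. Unions and
differences follow.
-/

section

open Function

variable {m : ℕ}

theorem ElementaryRegion.basicPolyhedral {E : Set (Fin m → ℤ)} (hE : ElementaryRegion E) :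
    BasicPolyhedral E :=
  ⟨1, fun _ => E, fun _ => hE, (Set.iInter_const E).symm⟩

theorem BasicPolyhedral.polyhedral {B : Set (Fin m → ℤ)} (hB : BasicPolyhedral B) :
    Polyhedral B :=
  ⟨1, fun _ => B, fun _ => hB, fun i j hij => absurd (Subsingleton.elim i j) hij,
    (Set.iUnion_const B).symm⟩

theorem basicPolyhedral_univ : BasicPolyhedral (Set.univ : Set (Fin m → ℤ)) :=
  ⟨0, Fin.elim0, fun i => i.elim0, (Set.iInter_of_empty _).symm⟩

theorem basicPolyhedral_iInter {ι : Type*} [Finite ι] {E : ι → Set (Fin m → ℤ)}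
    (hE : ∀ i, ElementaryRegion (E i)) : BasicPolyhedral (⋂ i, E i) := by
  obtain ⟨k, ⟨e⟩⟩ := Finite.exists_equiv_fin ι
  exact ⟨k, E ∘ e.symm, fun i => hE _, (e.symm.surjective.iInter_comp E).symm⟩

theorem BasicPolyhedral.inter {B C : Set (Fin m → ℤ)} (hB : BasicPolyhedral B)
    (hC : BasicPolyhedral C) : BasicPolyhedral (B ∩ C) := by
  obtain ⟨k, E, hE, rfl⟩ := hB
  obtain ⟨l, F, hF, rfl⟩ := hC
  simpa only [Set.iInter_sum, Sum.elim_inl, Sum.elim_inr] using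
    basicPolyhedral_iInter (E := Sum.elim E F) (Sum.forall.2 ⟨hE, hF⟩)

theorem polyhedral_iUnion_of_basic_of_disjoint {ι : Type*} [Finite ι]
    {B : ι → Set (Fin m → ℤ)}
    (hB : ∀ i, BasicPolyhedral (B i)) (hd : Pairwise (Disjoint on B)) :
    Polyhedral (⋃ i, B i) := by
  obtain ⟨k, ⟨e⟩⟩ := Finite.exists_equiv_fin ι
  exact ⟨k, B ∘ e.symm, fun i => hB _, fun i j hij => hd (e.symm.injective.ne hij),
    (e.symm.surjective.iUnion_comp B).symm⟩

theorem polyhedral_iUnion_of_disjoint {ι : Type*} [Finite ι] {P : ι → Set (Fin m → ℤ)}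
    (hP : ∀ i, Polyhedral (P i)) (hd : Pairwise (Disjoint on P)) :
    Polyhedral (⋃ i, P i) := by
  choose k B hB hdB hPB using hP
  rw [Set.iUnion_congr hPB, ← Set.iUnion_sigma fun p : (i : ι) × Fin (k i) => B p.1 p.2]
  refine polyhedral_iUnion_of_basic_of_disjoint (fun p => hB p.1 p.2) ?_
  rintro ⟨i, a⟩ ⟨j, b⟩ hne
  by_cases hij : i = j
  · subst hij
    exact hdB i a b fun hab => hne (hab ▸ rfl)
  · refine (hd hij).mono ?_ ?_
    · exact (Set.subset_iUnion (B i) a).trans (hPB i).ge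
    · exact (Set.subset_iUnion (B j) b).trans (hPB j).ge

theorem Polyhedral.inter {P Q : Set (Fin m → ℤ)} (hP : Polyhedral P) (hQ : Polyhedral Q) :
    Polyhedral (P ∩ Q) := by
  obtain ⟨k, B, hB, hdB, rfl⟩ := hP
  obtain ⟨l, C, hC, hdC, rfl⟩ := hQ
  rw [Set.iUnion_inter_iUnion, ← Set.iUnion_prod' fun p => B p.1 ∩ C p.2]
  refine polyhedral_iUnion_of_basic_of_disjoint (fun p => (hB p.1).inter (hC p.2)) ?_
  rintro ⟨i, a⟩ ⟨j, b⟩ hne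
  by_cases hij : i = j
  · subst hij
    exact (hdC a b fun hab => hne (hab ▸ rfl)).mono Set.inter_subset_right
      Set.inter_subset_right
  · exact (hdB i j hij).mono Set.inter_subset_left Set.inter_subset_left

theorem Polyhedral.biInter {ι : Type*} {P : ι → Set (Fin m → ℤ)} (s : Finset ι)
    (hP : ∀ i ∈ s, Polyhedral (P i)) : Polyhedral (⋂ i ∈ s, P i) := by
  classical
  induction s using Finset.induction_on with
  | empty =>
    simpa using basicPolyhedral_univ.polyhedral
  | insert i s _ ih =>
    rw [Finset.set_biInter_insert]
    exact (hP i (s.mem_insert_self i)).inter (ih fun j hj => hP j (Finset.mem_insert_of_mem hj))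

theorem Polyhedral.iInter {ι : Type*} [Finite ι] {P : ι → Set (Fin m → ℤ)}
    (hP : ∀ i, Polyhedral (P i)) : Polyhedral (⋂ i, P i) := by
  have := Fintype.ofFinite ι
  simpa using Polyhedral.biInter Finset.univ fun i _ => hP i

theorem polyhedral_preimage {α : Type*} [Finite α] (f : (Fin m → ℤ) → α)
    (hf : ∀ v, BasicPolyhedral (f ⁻¹' {v})) (s : Set α) : Polyhedral (f ⁻¹' s) := by
  rw [← Set.biUnion_preimage_singleton, Set.biUnion_eq_iUnion]
  exact polyhedral_iUnion_of_basic_of_disjoint (fun v => hf v)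
    ((pairwise_disjoint_fiber f).comp_of_injective Subtype.val_injective)

theorem basicPolyhedral_sign_fiber (a : Fin m → ℤ) (b : ℤ) (s : SignType) :
    BasicPolyhedral ((fun z => SignType.sign ((∑ i, a i * z i) - b)) ⁻¹' {s}) := by
  refine ElementaryRegion.basicPolyhedral ?_
  rcases s with _ | _ | _
  · exact Or.inl ⟨a, b, by ext z; simp [sub_eq_zero]⟩
  · refine Or.inr (Or.inl ⟨-a, -b, ?_⟩)
    ext z
    simp [sign_eq_neg_one_iff, Finset.sum_neg_distrib]
  · exact Or.inr (Or.inl ⟨a, b, by ext z; simp [sign_eq_one_iff]⟩)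

theorem basicPolyhedral_zmod_fiber (a : Fin m → ℤ) (n : ℕ) [NeZero n] (r : ZMod n) :
    BasicPolyhedral ((fun z => ((∑ i, a i * z i : ℤ) : ZMod n)) ⁻¹' {r}) := by
  refine ElementaryRegion.basicPolyhedral
    (Or.inr (Or.inr ⟨a, (r.cast : ℤ), n, by simpa using NeZero.pos n, ?_⟩))
  ext z
  show _ = r ↔ _ ≡ _ [ZMOD _]
  rw [← ZMod.intCast_eq_intCast_iff, ZMod.intCast_zmod_cast]

theorem ElementaryRegion.polyhedral_compl {E : Set (Fin m → ℤ)} (hE : ElementaryRegion E) :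
    Polyhedral Eᶜ := by
  rcases hE with ⟨a, b, rfl⟩ | ⟨a, b, rfl⟩ | ⟨a, b, c, hc, rfl⟩
  · have hE : {z : Fin m → ℤ | (∑ i, a i * z i) = b} =
        (fun z => SignType.sign ((∑ i, a i * z i) - b)) ⁻¹' {0} := by
      ext z; simp [sub_eq_zero]
    rw [hE, ← Set.preimage_compl]
    exact polyhedral_preimage _ (basicPolyhedral_sign_fiber a b) _
  · have hE : {z : Fin m → ℤ | (∑ i, a i * z i) > b} =
        (fun z => SignType.sign ((∑ i, a i * z i) - b)) ⁻¹' {1} := by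
      ext z; simp [sign_eq_one_iff]
    rw [hE, ← Set.preimage_compl]
    exact polyhedral_preimage _ (basicPolyhedral_sign_fiber a b) _
  · lift c to ℕ using hc.le
    have : NeZero c := ⟨by omega⟩
    have hE : {z : Fin m → ℤ | (∑ i, a i * z i) ≡ b [ZMOD c]} =
        (fun z => ((∑ i, a i * z i : ℤ) : ZMod c)) ⁻¹' {(b : ZMod c)} := by
      ext z; exact (ZMod.intCast_eq_intCast_iff _ _ _).symm
    rw [hE, ← Set.preimage_compl]
    exact polyhedral_preimage _ (basicPolyhedral_zmod_fiber a c) _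

theorem BasicPolyhedral.polyhedral_compl {B : Set (Fin m → ℤ)} (hB : BasicPolyhedral B) :
    Polyhedral Bᶜ := by
  obtain ⟨k, E, hE, rfl⟩ := hB
  rw [Set.compl_iInter, ← iUnion_disjointed]
  refine polyhedral_iUnion_of_disjoint (fun i => ?_) (disjoint_disjointed _)
  rw [disjointed_eq_inter_compl]
  simp only [compl_compl]
  refine (hE i).polyhedral_compl.inter ?_
  simpa only [Set.iInter_subtype] using
    (basicPolyhedral_iInter fun j : {j // j < i} => hE j).polyhedral

theorem Polyhedral.compl {P : Set (Fin m → ℤ)} (hP : Polyhedral P) : Polyhedral Pᶜ := by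
  obtain ⟨k, B, hB, -, rfl⟩ := hP
  rw [Set.compl_iUnion]
  exact Polyhedral.iInter fun i => (hB i).polyhedral_compl

theorem Polyhedral.iUnion {ι : Type*} [Finite ι] {P : ι → Set (Fin m → ℤ)}
    (hP : ∀ i, Polyhedral (P i)) : Polyhedral (⋃ i, P i) := by
  rw [← compl_compl (⋃ i, P i), Set.compl_iUnion]
  exact (Polyhedral.iInter fun i => (hP i).compl).compl

theorem Polyhedral.diff {P Q : Set (Fin m → ℤ)} (hP : Polyhedral P) (hQ : Polyhedral Q) :
    Polyhedral (P \ Q) :=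
  hP.inter hQ.compl

end

/-- The class of polyhedral subsets of `ℤ^m` is closed under finite union,
finite intersection, and set difference. -/
theorem polyhedral_closure {m : ℕ}
    (k : ℕ) (F : Fin k → Set (Fin m → ℤ)) (hF : ∀ i, Polyhedral (F i))
    (P Q : Set (Fin m → ℤ)) (hP : Polyhedral P) (hQ : Polyhedral Q) :
    Polyhedral (⋃ i, F i) ∧ Polyhedral (⋂ i, F i) ∧ Polyhedral (P \ Q) :=
  ⟨Polyhedral.iUnion hF, Polyhedral.iInter hF, hP.diff hQ⟩
end

section
/- Let A = (a_n) be an integer sequence with a_n ≥ 1 for all n, such that f(z) = Σ a_n z^n is a rational function. If lim_{n→∞} a_n^{1/n} = 1, then there exist constants β, d such that a_n ≤ β·n^d for all n ≥ 1. -/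
/-!
Since `a_n^{1/n} → 1`, the series `g z = ∑ a_n z^n` converges and is analytic on the open unit
disc. Write `p / q` in lowest terms `p' / q'`; the identity theorem gives `p' = q' g` on the disc,
so by coprimality `q'` has no zero there. Hence `‖g r‖ ≤ K (1 - r)^{-m}` for `0 ≤ r < 1`, where
`m = deg q'`: every root `α` of `q'` has `‖r - α‖ ≥ 1 - r`. As the `a_n` are nonnegative,
`a_n r^n ≤ g r`; at `r = 1 - 1/(n+1)` Bernoulli's inequality gives `r^n ≥ 1/(n+1)`, so
`a_n ≤ K (n+1)^{m+1}`.
-/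

open Filter Topology Polynomial

namespace FormalMultilinearSeries

theorem radius_eq_inv_of_tendsto_rpow {𝕜 E F : Type*} [NontriviallyNormedField 𝕜]
    [NormedAddCommGroup E] [NormedSpace 𝕜 E] [NormedAddCommGroup F] [NormedSpace 𝕜 F]
    (p : FormalMultilinearSeries 𝕜 E F) {r : NNReal}
    (hp : Tendsto (fun n => ‖p n‖₊ ^ (1 / (n : ℝ))) atTop (𝓝 r)) :
    p.radius = (r : ENNReal)⁻¹ := by
  rw [← inv_inv p.radius, radius_inv_eq_limsup, (ENNReal.tendsto_coe.2 hp).limsup_eq]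

variable {𝕜 : Type*} [NontriviallyNormedField 𝕜] {c : ℕ → 𝕜}

theorem ofScalars_radius_eq_one_of_tendsto_rpow
    (hc : Tendsto (fun n => ‖c n‖ ^ (1 / (n : ℝ))) atTop (𝓝 1)) :
    (ofScalars 𝕜 c).radius = 1 := by
  rw [radius_eq_inv_of_tendsto_rpow (r := 1), ENNReal.coe_one, inv_one]
  rw [← NNReal.tendsto_coe]
  simpa [ofScalars_norm] using hc

end FormalMultilinearSeries

theorem exists_analyticOnNhd_hasSum_of_tendsto_rpow {𝕜 : Type*} [NontriviallyNormedField 𝕜]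
    [CompleteSpace 𝕜] {c : ℕ → 𝕜} (hc : Tendsto (fun n => ‖c n‖ ^ (1 / (n : ℝ))) atTop (𝓝 1)) :
    ∃ g : 𝕜 → 𝕜, AnalyticOnNhd 𝕜 g (Metric.ball 0 1) ∧
      ∀ z ∈ Metric.ball (0 : 𝕜) 1, HasSum (fun n => c n * z ^ n) (g z) := by
  set F := FormalMultilinearSeries.ofScalars 𝕜 c
  have hrad := FormalMultilinearSeries.ofScalars_radius_eq_one_of_tendsto_rpow hc
  have hF := F.hasFPowerSeriesOnBall (hrad ▸ one_pos)
  have hball : Metric.eball (0 : 𝕜) 1 = Metric.ball 0 1 := by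
    rw [← ENNReal.coe_one, Metric.eball_coe, NNReal.coe_one]
  rw [hrad] at hF
  refine ⟨F.sum, hball ▸ hF.analyticOnNhd, fun z hz => ?_⟩
  simpa [F, FormalMultilinearSeries.ofScalars_apply_eq, mul_comm] using hF.hasSum (hball ▸ hz)

namespace Polynomial

theorem exists_isCoprime_eventuallyEq_div {K : Type*} [Field K] [TopologicalSpace K]
    [IsTopologicalRing K] [T1Space K] (p q : K[X]) {z₀ : K} (hq : q.eval z₀ ≠ 0) :
    ∃ p' q' : K[X], IsCoprime p' q' ∧ q'.eval z₀ ≠ 0 ∧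
      (fun z => p.eval z / q.eval z) =ᶠ[𝓝 z₀] fun z => p'.eval z / q'.eval z := by
  classical
  have hq0 : q ≠ 0 := by rintro rfl; simp at hq
  set d := GCDMonoid.gcd p q
  have hd : d ≠ 0 := gcd_ne_zero_of_right hq0
  have hp_eq : d * (p / d) = p := EuclideanDomain.mul_div_cancel' hd (gcd_dvd_left p q)
  have hq_eq : d * (q / d) = q := EuclideanDomain.mul_div_cancel' hd (gcd_dvd_right p q)
  have hdq : d.eval z₀ * (q / d).eval z₀ ≠ 0 := by rwa [← eval_mul, hq_eq]
  refine ⟨p / d, q / d, isCoprime_div_gcd_div_gcd hq0, right_ne_zero_of_mul hdq, ?_⟩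
  filter_upwards [d.continuous.continuousAt.eventually_ne (left_ne_zero_of_mul hdq)] with z hz
  conv_lhs => rw [← hp_eq, ← hq_eq, eval_mul, eval_mul, mul_div_mul_left _ _ hz]

theorem eval_ne_zero_of_isCoprime_of_eqOn {R : Type*} [CommRing R] [Nontrivial R]
    {p q : R[X]} (hpq : IsCoprime p q) {g : R → R} {U : Set R}
    (h : Set.EqOn (fun z => p.eval z) (fun z => q.eval z * g z) U) {z : R} (hz : z ∈ U) :
    q.eval z ≠ 0 := fun hqz => by
  have hpz : p.eval z = 0 := by simpa [hqz] using h hz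
  simpa [hpz, hqz] using aeval_ne_zero_of_isCoprime hpq z

theorem eqOn_mul_eval_of_eventuallyEq_div {𝕜 : Type*} [NontriviallyNormedField 𝕜]
    {p q : 𝕜[X]} {g : 𝕜 → 𝕜} {U : Set 𝕜} {z₀ : 𝕜} (hg : AnalyticOnNhd 𝕜 g U)
    (hU : IsPreconnected U) (hz₀ : z₀ ∈ U) (hq : q.eval z₀ ≠ 0)
    (hgpq : g =ᶠ[𝓝 z₀] fun z => p.eval z / q.eval z) :
    Set.EqOn (fun z => p.eval z) (fun z => q.eval z * g z) U := by
  have hpoly (f : 𝕜[X]) : AnalyticOnNhd 𝕜 (fun z => f.eval z) U :=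
    (AnalyticOnNhd.eval_polynomial f).mono (Set.subset_univ U)
  refine (hpoly p).eqOn_of_preconnected_of_eventuallyEq ((hpoly q).mul hg) hU hz₀ ?_
  filter_upwards [hgpq, q.continuous.continuousAt.eventually_ne hq] with z hz hqz
  rw [hz, mul_div_cancel₀ _ hqz]

theorem norm_leadingCoeff_mul_pow_le_norm_eval {K : Type*} [NormedField K] [IsAlgClosed K]
    (q : K[X]) {R : ℝ} (hroots : ∀ α ∈ q.roots, R ≤ ‖α‖) {z : K} (hz : ‖z‖ ≤ R) :
    ‖q.leadingCoeff‖ * (R - ‖z‖) ^ q.natDegree ≤ ‖q.eval z‖ := by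
  have hsplit := IsAlgClosed.splits q
  have hnorm : ‖(q.roots.map (z - ·)).prod‖ = (q.roots.map fun α => ‖z - α‖).prod := by
    simpa [Multiset.map_map] using map_multiset_prod (normHom : K →*₀ ℝ) (q.roots.map (z - ·))
  rw [hsplit.eval_eq_prod_roots, norm_mul, hnorm, ← splits_iff_card_roots.1 hsplit,
    ← Multiset.prod_replicate, ← Multiset.map_const']
  gcongr
  refine Multiset.prod_map_le_prod_map₀ _ _ (fun _ _ => sub_nonneg.2 hz) fun α hα => ?_
  calc R - ‖z‖ ≤ ‖α‖ - ‖z‖ := by gcongr; exact hroots α hα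
    _ ≤ ‖z - α‖ := by rw [norm_sub_rev]; exact norm_sub_norm_le α z

theorem exists_norm_div_eval_mul_pow_le (p q : ℂ[X]) (hq : ∀ z : ℂ, ‖z‖ < 1 → q.eval z ≠ 0) :
    ∃ (K : ℝ) (m : ℕ), ∀ z : ℂ, ‖z‖ < 1 → ‖p.eval z / q.eval z‖ * (1 - ‖z‖) ^ m ≤ K := by
  obtain ⟨C, hC⟩ := (isCompact_closedBall (0 : ℂ) 1).exists_bound_of_continuousOn
    p.continuous.continuousOn
  refine ⟨C / ‖q.leadingCoeff‖, q.natDegree, fun z hz => ?_⟩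
  have hroots : ∀ α ∈ q.roots, 1 ≤ ‖α‖ := fun α hα =>
    not_lt.1 fun h => hq α h (mem_roots'.1 hα).2
  have hC0 : 0 ≤ C := (norm_nonneg _).trans (hC 0 (Metric.mem_closedBall_self zero_le_one))
  have hz' : 0 < 1 - ‖z‖ := sub_pos.2 hz
  have hlc : 0 < ‖q.leadingCoeff‖ := by
    rw [norm_pos_iff, leadingCoeff_ne_zero]
    rintro rfl
    exact hq 0 (by simp) eval_zero
  calc ‖p.eval z / q.eval z‖ * (1 - ‖z‖) ^ q.natDegree
      = ‖p.eval z‖ * (1 - ‖z‖) ^ q.natDegree / ‖q.eval z‖ := by rw [norm_div]; ring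
    _ ≤ C * (1 - ‖z‖) ^ q.natDegree / (‖q.leadingCoeff‖ * (1 - ‖z‖) ^ q.natDegree) := by
        gcongr
        · exact hC z (mem_closedBall_zero_iff.2 hz.le)
        · exact q.norm_leadingCoeff_mul_pow_le_norm_eval hroots hz.le
    _ = C / ‖q.leadingCoeff‖ := by field_simp

end Polynomial

theorem IsCoprime.eqOn_div_of_eventuallyEq {𝕜 : Type*} [NontriviallyNormedField 𝕜]
    {p q : 𝕜[X]} (hpq : IsCoprime p q) {g : 𝕜 → 𝕜} {U : Set 𝕜} {z₀ : 𝕜}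
    (hg : AnalyticOnNhd 𝕜 g U) (hU : IsPreconnected U) (hz₀ : z₀ ∈ U) (hq : q.eval z₀ ≠ 0)
    (hgpq : g =ᶠ[𝓝 z₀] fun z => p.eval z / q.eval z) :
    ∀ z ∈ U, q.eval z ≠ 0 ∧ g z = p.eval z / q.eval z := fun z hz => by
  have hid := eqOn_mul_eval_of_eventuallyEq_div hg hU hz₀ hq hgpq
  have hqz := eval_ne_zero_of_isCoprime_of_eqOn hpq hid hz
  exact ⟨hqz, eq_div_of_mul_eq hqz (by rw [mul_comm]; exact (hid hz).symm)⟩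

theorem le_mul_add_one_pow_of_hasSum_mul_pow {a : ℕ → ℝ} (ha : ∀ n, 0 ≤ a n) {s : ℝ → ℝ}
    {K : ℝ} {m : ℕ} (hs : ∀ r, 0 ≤ r → r < 1 → HasSum (fun n => a n * r ^ n) (s r))
    (hK : ∀ r, 0 ≤ r → r < 1 → s r * (1 - r) ^ m ≤ K) (n : ℕ) :
    a n ≤ K * (n + 1) ^ (m + 1) := by
  set t : ℝ := ((n : ℝ) + 1)⁻¹
  have ht : 0 < t := by positivity
  have hnt : (n + 1) * t = 1 := mul_inv_cancel₀ (by positivity)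
  have hr0 : 0 ≤ 1 - t := sub_nonneg.2 (inv_le_one_of_one_le₀ (by simp))
  have hr1 : 1 - t < 1 := by linarith
  have hbern : t ≤ (1 - t) ^ n :=
    calc t = 1 + n * -t := by linear_combination hnt
      _ ≤ (1 + -t) ^ n := one_add_mul_le_pow (by linarith) n
      _ = (1 - t) ^ n := by ring
  calc a n = a n * t * t ^ m * (n + 1) ^ (m + 1) := by
        rw [mul_assoc (a n), ← pow_succ', mul_assoc, ← mul_pow, mul_comm t, hnt, one_pow, mul_one]
    _ ≤ a n * (1 - t) ^ n * (1 - (1 - t)) ^ m * (n + 1) ^ (m + 1) := by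
        rw [sub_sub_cancel]; gcongr; exact ha n
    _ ≤ s (1 - t) * (1 - (1 - t)) ^ m * (n + 1) ^ (m + 1) := by
        gcongr
        exact le_hasSum (hs _ hr0 hr1) n fun j _ => mul_nonneg (ha j) (pow_nonneg hr0 j)
    _ ≤ K * (n + 1) ^ (m + 1) := by gcongr; exact hK _ hr0 hr1

theorem exists_le_mul_add_one_pow_of_hasSum_div_eval {a : ℕ → ℝ} (ha : ∀ n, 0 ≤ a n)
    {p q : ℂ[X]} (hq : ∀ z : ℂ, ‖z‖ < 1 → q.eval z ≠ 0)
    (hsum : ∀ z : ℂ, ‖z‖ < 1 → HasSum (fun n => (a n : ℂ) * z ^ n) (p.eval z / q.eval z)) :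
    ∃ (K : ℝ) (d : ℕ), ∀ n, a n ≤ K * (n + 1) ^ d := by
  obtain ⟨K, m, hK⟩ := exists_norm_div_eval_mul_pow_le p q hq
  have hr {r : ℝ} (h0 : 0 ≤ r) (h1 : r < 1) : ‖(r : ℂ)‖ < 1 := by
    rwa [Complex.norm_of_nonneg h0]
  refine ⟨K, m + 1, le_mul_add_one_pow_of_hasSum_mul_pow ha
    (s := fun r => (p.eval (r : ℂ) / q.eval (r : ℂ)).re) (fun r h0 h1 => ?_) fun r h0 h1 => ?_⟩
  · simpa [← Complex.ofReal_pow] using Complex.hasSum_re (hsum r (hr h0 h1))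
  · calc (p.eval (r : ℂ) / q.eval (r : ℂ)).re * (1 - r) ^ m
        ≤ ‖p.eval (r : ℂ) / q.eval (r : ℂ)‖ * (1 - ‖(r : ℂ)‖) ^ m := by
          rw [Complex.norm_of_nonneg h0]
          gcongr
          exact Complex.re_le_norm _
      _ ≤ K := hK r (hr h0 h1)

theorem exists_nat_le_mul_pow_of_le_mul_add_one_pow {a : ℕ → ℕ} {K : ℝ} {d : ℕ}
    (h : ∀ n, (a n : ℝ) ≤ K * (n + 1) ^ d) : ∃ β : ℕ, ∀ n, 1 ≤ n → a n ≤ β * n ^ d := by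
  have hK : 0 ≤ K := by simpa using (Nat.cast_nonneg (a 0)).trans (h 0)
  refine ⟨⌈K * 2 ^ d⌉₊, fun n hn => ?_⟩
  have hn' : (1 : ℝ) ≤ n := by exact_mod_cast hn
  exact_mod_cast calc (a n : ℝ) ≤ K * (n + 1) ^ d := h n
    _ ≤ K * (2 * n) ^ d := by gcongr; linarith
    _ = K * 2 ^ d * n ^ d := by ring
    _ ≤ ⌈K * 2 ^ d⌉₊ * n ^ d := by gcongr; exact Nat.le_ceil _

theorem rational_subexponential_implies_polynomial_general
    (a : ℕ → ℕ)
    (p q : Polynomial ℂ) (hq0 : q.eval 0 ≠ 0)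
    (ε : ℝ) (hε : 0 < ε)
    (hf : ∀ z ∈ Metric.ball (0 : ℂ) ε,
      HasSum (fun n : ℕ => (a n : ℂ) * z ^ n) (p.eval z / q.eval z))
    (hlim : Tendsto (fun n : ℕ => (a n : ℝ) ^ (1 / (n : ℝ))) atTop (nhds 1)) :
    ∃ β d : ℕ, ∀ n : ℕ, 1 ≤ n → a n ≤ β * n ^ d := by
  obtain ⟨g, hg, hsum⟩ :=
    exists_analyticOnNhd_hasSum_of_tendsto_rpow (c := fun n => (a n : ℂ)) (by simpa using hlim)
  obtain ⟨p', q', hcop, hq', hpq'⟩ := exists_isCoprime_eventuallyEq_div p q hq0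
  have hgpq : g =ᶠ[𝓝 0] fun z => p'.eval z / q'.eval z := by
    filter_upwards [hpq', Metric.ball_mem_nhds 0 hε, Metric.ball_mem_nhds 0 one_pos]
      with z hz hzε hz1
    rw [← hz]
    exact (hsum z hz1).unique (hf z hzε)
  have hdisc := hcop.eqOn_div_of_eventuallyEq hg (convex_ball (0 : ℂ) 1).isPreconnected
    (Metric.mem_ball_self one_pos) hq' hgpq
  obtain ⟨K, d, hK⟩ := exists_le_mul_add_one_pow_of_hasSum_div_eval (a := fun n => (a n : ℝ))
    (fun n => Nat.cast_nonneg _) (fun z hz => (hdisc z (mem_ball_zero_iff.2 hz)).1)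
    fun z hz => (hdisc z (mem_ball_zero_iff.2 hz)).2 ▸ hsum z (mem_ball_zero_iff.2 hz)
  obtain ⟨β, hβ⟩ := exists_nat_le_mul_pow_of_le_mul_add_one_pow hK
  exact ⟨β, d, hβ⟩

/-- If `Σ a_n z^n` has positive integer coefficients, agrees with a rational function
near `0`, and `a_n^{1/n} → 1`, then `a_n` is bounded by a polynomial in `n`. -/
theorem rational_subexponential_implies_polynomial
    (a : ℕ → ℕ) (ha : ∀ n, 1 ≤ a n)
    (p q : Polynomial ℂ) (hq0 : q.eval 0 ≠ 0)
    (ε : ℝ) (hε : 0 < ε)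
    (hf : ∀ z ∈ Metric.ball (0 : ℂ) ε,
      HasSum (fun n : ℕ => (a n : ℂ) * z ^ n) (p.eval z / q.eval z))
    (hlim : Tendsto (fun n : ℕ => (a n : ℝ) ^ (1 / (n : ℝ))) atTop (nhds 1)) :
    ∃ β d : ℕ, ∀ n : ℕ, 1 ≤ n → a n ≤ β * n ^ d :=
  rational_subexponential_implies_polynomial_general a p q hq0 ε hε hf hlim
end
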